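/- Let G be a finite connected simple graph, let Z be a clique of G that separates two vertices x and y, and suppose that the closed neighborhood N[x] of x intersects Z in exactly one vertex z (so z is a neighbor of x, since x ∉ Z). Then z lies on a shortest path between x and y, i.e. d(x,y) = 1 + d(z,y). -/
import Mathlib


/-- `Z` separates `u` and `v`: both are outside `Z` and every walk from `u` to `v`
meets `Z` (i.e. `u` and `v` lie in different components of `G − Z`). -/
def Separates {V : Type*} (G : SimpleGraph V) (Z : Set V) (u v : V) : Prop :=
  u ∉ Z ∧ v ∉ Z ∧ ∀ p : G.Walk u v, ∃ w ∈ p.support, w ∈ Z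

theorem stmt2 {V : Type*} [Fintype V] (G : SimpleGraph V) (hG : G.Connected)
    (Z : Set V) (hZ : G.IsClique Z)
    (x y z : V) (hsep : Separates G Z x y)
    (hz : (insert x (G.neighborSet x)) ∩ Z = {z}) :
    G.dist x y = 1 + G.dist z y := by
  classical
  obtain ⟨hx, hy, hmeet⟩ := hsep
  have hzmem : z ∈ (insert x (G.neighborSet x)) ∩ Z := by rw [hz]; rfl
  obtain ⟨hz1, hzZ⟩ := hzmem
  have hzx : z ≠ x := fun h => hx (h ▸ hzZ)
  have hadj : G.Adj x z := by
    rcases hz1 with h | h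
    · exact absurd h hzx
    · exact h
  obtain ⟨p, hp⟩ := (hG x y).exists_walk_length_eq_dist
  obtain ⟨w, hw, hwZ⟩ := hmeet p
  set q := p.takeUntil w hw with hq
  set r := p.dropUntil w hw with hr
  have hsplit : q.length + r.length = p.length := by
    have := congr_arg SimpleGraph.Walk.length (p.take_spec hw)
    rwa [SimpleGraph.Walk.length_append] at this
  have hxw : x ≠ w := fun h => hx (h ▸ hwZ)
  have hq1 : 1 ≤ q.length := by
    rcases Nat.eq_zero_or_pos q.length with h0 | h0
    · exact absurd (SimpleGraph.Walk.eq_of_length_eq_zero h0) hxw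
    · exact h0
  have key : G.dist z y + 1 ≤ p.length := by
    by_cases hwz : w = z
    · subst hwz
      have := G.dist_le r
      omega
    · have hadjzw : G.Adj z w := hZ hzZ hwZ (Ne.symm hwz)
      have hd : G.dist z y ≤ r.length + 1 := by
        have := G.dist_le (SimpleGraph.Walk.cons hadjzw r)
        simpa using this
      have hq2 : 2 ≤ q.length := by
        by_contra h2
        have h1 : q.length = 1 := by omega
        have hxwadj : G.Adj x w := SimpleGraph.Walk.adj_of_length_eq_one h1
        have hwmem : w ∈ (insert x (G.neighborSet x)) ∩ Z := ⟨Or.inr hxwadj, hwZ⟩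
        rw [hz] at hwmem
        exact hwz hwmem
      omega
  have hle : G.dist x y ≤ 1 + G.dist z y := by
    have := hG.dist_triangle (u := x) (v := z) (w := y)
    have hxz : G.dist x z = 1 := by
      exact SimpleGraph.dist_eq_one_iff_adj.mpr hadj
    omega
  have hge : 1 + G.dist z y ≤ G.dist x y := by omega
  omega
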